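/- arXiv:1802.04050 — 4 statements merged into one kernel-verified Lean document; each statement's English description precedes it below -/
import Mathlib

section
/- In the normal hierarchical model with $\sigma^2 = \tau^2 = 1$ (so $\omega = 1/2$), the Empirical Bayes interval $(1-\omega)X_1 + \omega\overline{X} \pm z_{\alpha/2}\sqrt{1-\omega}$ has joint coverage probability $P(\mu_1 \in C_\alpha(X)) = 2\Phi\left(z_{\alpha/2}\sqrt{\frac{1-\omega}{1-\omega(n-1)/n}}\right) - 1$, which is strictly less than $1-\alpha$ for every finite $n \ge 2$ and converges to $1-\alpha$ as $n \to \infty$. -/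
open MeasureTheory ProbabilityTheory

/-!
The pivot `V` is centred normal with variance `r = 1 - w(n-1)/n > 1 - w`, so by symmetry of the
normal law the coverage of `|V| ≤ z√(1 - w)` is `2Φ(z√((1 - w)/r)) - 1`. Since `(1 - w)/r < 1` and
`Φ` is strictly increasing, this is below `2Φ(z) - 1 = 1 - α`; since `r → 1 - w` and `Φ` is
continuous, it tends to `1 - α`.
-/

section Symmetric

variable {μ : Measure ℝ} [IsProbabilityMeasure μ] [NullSingletonClass μ]

lemma continuous_cdf_of_nullSingletonClass : Continuous (cdf μ) := by
  refine continuous_iff_continuousAt.2 fun x => ?_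
  set f := cdf μ
  rw [f.mono.continuousAt_iff_leftLim_eq_rightLim, f.rightLim_eq]
  have hjump : ENNReal.ofReal (f x - Function.leftLim f x) = 0 := by
    rw [← f.measure_singleton, measure_cdf, measure_singleton]
  have hle : Function.leftLim f x ≤ f x := f.mono.leftLim_le le_rfl
  linarith [ENNReal.ofReal_eq_zero.1 hjump]

lemma cdf_neg_of_map_neg_eq (hμ : μ.map (fun x => -x) = μ) (x : ℝ) :
    cdf μ (-x) = 1 - cdf μ x := by
  have hIic : μ.real (Set.Iic (-x)) = μ.real (Set.Ici x) := by
    conv_lhs => rw [← hμ]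
    rw [map_measureReal_apply measurable_neg measurableSet_Iic]
    congr 1
    ext y
    simp
  rw [cdf_eq_real, cdf_eq_real, hIic, ← Set.compl_Iio, probReal_compl_eq_one_sub measurableSet_Iio,
    measureReal_congr Iio_ae_eq_Iic]

lemma measure_abs_le_of_map_neg_eq (hμ : μ.map (fun x => -x) = μ) (c : ℝ) :
    μ {y | |y| ≤ c} = ENNReal.ofReal (2 * cdf μ c - 1) := by
  have hIcc : {y : ℝ | |y| ≤ c} = Set.Icc (-c) c := by ext y; simp [abs_le]
  have hIoc := (cdf μ).measure_Ioc (-c) c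
  rw [measure_cdf] at hIoc
  rw [hIcc, ← measure_congr Ioc_ae_eq_Icc, hIoc, cdf_neg_of_map_neg_eq hμ]
  ring_nf

end Symmetric

lemma strictMono_cdf_gaussianReal (m : ℝ) {v : NNReal} (hv : v ≠ 0) :
    StrictMono (cdf (gaussianReal m v)) := by
  intro a b hab
  have hpos : 0 < gaussianReal m v (Set.Ioc a b) := by
    rw [gaussianReal_apply m hv, setLIntegral_pos_iff (measurable_gaussianPDF m v),
      support_gaussianPDF hv, Set.univ_inter, Real.volume_Ioc]
    exact ENNReal.ofReal_pos.2 (sub_pos.2 hab)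
  rw [← measure_cdf (gaussianReal m v), StieltjesFunction.measure_Ioc] at hpos
  exact sub_pos.1 (ENNReal.ofReal_pos.1 hpos)

lemma cdf_gaussianReal_zero_eq_cdf_div_sqrt {v : NNReal} (hv : v ≠ 0) (x : ℝ) :
    cdf (gaussianReal 0 v) x = cdf (gaussianReal 0 1) (x / Real.sqrt v) := by
  have hsqrt : 0 < Real.sqrt v := Real.sqrt_pos.2 (by positivity)
  have hmap : (gaussianReal 0 1).map (Real.sqrt v * ·) = gaussianReal 0 v := by
    rw [gaussianReal_map_const_mul]
    norm_num
  rw [cdf_eq_real, cdf_eq_real, ← hmap,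
    map_measureReal_apply (measurable_const_mul _) measurableSet_Iic]
  congr 1
  ext y
  simp [le_div_iff₀' hsqrt]

lemma continuous_cdf_gaussianReal (m : ℝ) {v : NNReal} (hv : v ≠ 0) :
    Continuous (cdf (gaussianReal m v)) :=
  have := nullSingletonClass_gaussianReal (μ := m) hv
  continuous_cdf_of_nullSingletonClass

lemma map_neg_gaussianReal_zero (v : NNReal) :
    (gaussianReal 0 v).map (fun x => -x) = gaussianReal 0 v := by
  simpa using gaussianReal_map_neg (μ := 0) (v := v)

lemma cdf_gaussianReal_zero_neg {v : NNReal} (hv : v ≠ 0) (x : ℝ) :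
    cdf (gaussianReal 0 v) (-x) = 1 - cdf (gaussianReal 0 v) x :=
  have := nullSingletonClass_gaussianReal (μ := 0) hv
  cdf_neg_of_map_neg_eq (map_neg_gaussianReal_zero v) x

lemma gaussianReal_apply_abs_le {v : NNReal} (hv : v ≠ 0) (c : ℝ) :
    gaussianReal 0 v {y | |y| ≤ c}
      = ENNReal.ofReal (2 * cdf (gaussianReal 0 1) (c / Real.sqrt v) - 1) := by
  have := nullSingletonClass_gaussianReal (μ := 0) hv
  rw [measure_abs_le_of_map_neg_eq (map_neg_gaussianReal_zero v),
    cdf_gaussianReal_zero_eq_cdf_div_sqrt hv]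

lemma measure_abs_le_of_map_eq_gaussianReal {Ω : Type*} [MeasurableSpace Ω] {P : Measure Ω}
    {V : Ω → ℝ} {v : NNReal} (hv : v ≠ 0) (hV : P.map V = gaussianReal 0 v) (c : ℝ) :
    P {ω | |V ω| ≤ c} = ENNReal.ofReal (2 * cdf (gaussianReal 0 1) (c / Real.sqrt v) - 1) := by
  have hVm : AEMeasurable V P := aemeasurable_of_map_neZero (by rw [hV]; infer_instance)
  have hs : MeasurableSet {y : ℝ | |y| ≤ c} := measurableSet_le measurable_abs measurable_const
  rw [← gaussianReal_apply_abs_le hv, ← hV, Measure.map_apply_of_aemeasurable hVm hs]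
  rfl

lemma one_sub_lt_one_sub_mul_sub_one_div {w : ℝ} (hw : 0 < w) (n : ℕ) :
    1 - w < 1 - w * ((n : ℝ) - 1) / n := by
  rcases Nat.eq_zero_or_pos n with rfl | hn
  · simpa using hw
  have hn' : (0 : ℝ) < n := by exact_mod_cast hn
  rw [sub_lt_sub_iff_left, div_lt_iff₀ hn']
  nlinarith

lemma tendsto_one_sub_mul_sub_one_div (w : ℝ) :
    Filter.Tendsto (fun n : ℕ => 1 - w * ((n : ℝ) - 1) / n) Filter.atTop (nhds (1 - w)) := by
  have hlim : Filter.Tendsto (fun n : ℕ => 1 - w + w * (1 / (n : ℝ))) Filter.atTop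
      (nhds (1 - w + w * 0)) :=
    tendsto_const_nhds.add (tendsto_one_div_atTop_nhds_zero_nat.const_mul w)
  rw [mul_zero, add_zero] at hlim
  refine hlim.congr' ?_
  filter_upwards [Filter.eventually_ne_atTop 0] with n hn
  field_simp
  ring

lemma pos_of_half_lt_cdf_gaussianReal {v : NNReal} (hv : v ≠ 0) {z : ℝ}
    (hz : 1 / 2 < cdf (gaussianReal 0 v) z) : 0 < z := by
  have hhalf : cdf (gaussianReal 0 v) 0 = 1 / 2 := by
    linarith [neg_zero (G := ℝ) ▸ cdf_gaussianReal_zero_neg hv 0]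
  by_contra! hz_nonpos
  linarith [monotone_cdf (gaussianReal 0 v) hz_nonpos]

lemma measure_abs_le_mul_sqrt_of_map_eq_gaussianReal {Ω : Type*} [MeasurableSpace Ω]
    {P : Measure Ω} {V : Ω → ℝ} {r : ℝ} (hV : P.map V = gaussianReal 0 r.toNNReal) (hr : 0 < r)
    {a : ℝ} (ha : 0 ≤ a) (z : ℝ) :
    P {ω | |V ω| ≤ z * Real.sqrt a}
      = ENNReal.ofReal (2 * cdf (gaussianReal 0 1) (z * Real.sqrt (a / r)) - 1) := by
  rw [measure_abs_le_of_map_eq_gaussianReal (Real.toNNReal_pos.2 hr).ne' hV,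
    Real.coe_toNNReal _ hr.le, Real.sqrt_div ha, mul_div_assoc]

lemma cdf_gaussianReal_mul_sqrt_div_lt {z a r : ℝ} (hz : 0 < z) (ha : 0 < a) (har : a < r) :
    cdf (gaussianReal 0 1) (z * Real.sqrt (a / r)) < cdf (gaussianReal 0 1) z := by
  refine strictMono_cdf_gaussianReal 0 one_ne_zero (mul_lt_of_lt_one_right hz ?_)
  rw [Real.sqrt_lt' one_pos, one_pow, div_lt_one (ha.trans har)]
  exact har

lemma tendsto_cdf_gaussianReal_mul_sqrt_div {w : ℝ} (hw : w ≠ 1) (z : ℝ) :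
    Filter.Tendsto
      (fun n : ℕ => cdf (gaussianReal 0 1) (z * Real.sqrt ((1 - w) / (1 - w * ((n : ℝ) - 1) / n))))
      Filter.atTop (nhds (cdf (gaussianReal 0 1) z)) := by
  have hcont :
      ContinuousAt (fun r => cdf (gaussianReal 0 1) (z * Real.sqrt ((1 - w) / r))) (1 - w) := by
    have := continuous_cdf_gaussianReal 0 one_ne_zero
    fun_prop (disch := exact sub_ne_zero.2 hw.symm)
  have hlim := hcont.tendsto.comp (tendsto_one_sub_mul_sub_one_div w)
  rwa [div_self (sub_ne_zero.2 hw.symm), Real.sqrt_one, mul_one] at hlim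

theorem stmt_3_general (α : ℝ) (hα : α ∈ Set.Ioo (0 : ℝ) 1)
    (z : ℝ) (hz : cdf (gaussianReal 0 1) z = 1 - α / 2)
    (Ω : ℕ → Type*) (mΩ : ∀ n, MeasurableSpace (Ω n))
    (P : ∀ n, Measure (Ω n))
    (V : ∀ n, Ω n → ℝ)
    (hV : ∀ n, 2 ≤ n → Measure.map (V n) (P n) =
      gaussianReal 0 ((1 - (1 / 2 : ℝ) * ((n : ℝ) - 1) / n).toNNReal))
    (Φ : ℝ → ℝ) (hΦ : ∀ x, Φ x = cdf (gaussianReal 0 1) x) :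
    (∀ n, 2 ≤ n →
      (P n) {ω | |V n ω| ≤ z * Real.sqrt (1 - 1 / 2)} =
        ENNReal.ofReal
          (2 * Φ (z * Real.sqrt ((1 - 1 / 2) / (1 - (1 / 2 : ℝ) * ((n : ℝ) - 1) / n))) - 1) ∧
      2 * Φ (z * Real.sqrt ((1 - 1 / 2) / (1 - (1 / 2 : ℝ) * ((n : ℝ) - 1) / n))) - 1
        < 1 - α) ∧
    Filter.Tendsto
      (fun n : ℕ =>
        2 * Φ (z * Real.sqrt ((1 - 1 / 2) / (1 - (1 / 2 : ℝ) * ((n : ℝ) - 1) / n))) - 1)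
      Filter.atTop (nhds (1 - α)) := by
  obtain rfl : Φ = cdf (gaussianReal 0 1) := funext hΦ
  have hz_pos : 0 < z := pos_of_half_lt_cdf_gaussianReal one_ne_zero (by linarith [hα.2])
  have hvar (n : ℕ) := one_sub_lt_one_sub_mul_sub_one_div (w := 1 / 2) one_half_pos n
  have hhalf : (0 : ℝ) < 1 - 1 / 2 := by norm_num
  refine ⟨fun n hn => ⟨?_, ?_⟩, ?_⟩
  · exact measure_abs_le_mul_sqrt_of_map_eq_gaussianReal (hV n hn) (hhalf.trans (hvar n))
      hhalf.le z
  · linarith [cdf_gaussianReal_mul_sqrt_div_lt hz_pos hhalf (hvar n)]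
  · have hlim := ((tendsto_cdf_gaussianReal_mul_sqrt_div (w := 1 / 2) (by norm_num) z).const_mul
      2).sub_const 1
    rwa [hz, show 2 * (1 - α / 2) - 1 = 1 - α by ring] at hlim

/-- In the normal hierarchical model with `σ² = τ² = 1` (so `w = 1/2`), the Empirical Bayes
interval `(1-w)X₁ + w X̄ ± z√(1-w)` has joint coverage
`2Φ(z√((1-w)/(1-w(n-1)/n))) - 1`, which is strictly below `1-α` for every finite `n ≥ 2`
and converges to `1-α` as `n → ∞`. The pivotal fact
`(1-w)X₁ + w X̄ - μ₁ ~ N(0, 1 - w(n-1)/n)` is encoded via the pivot `V n`. -/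
theorem stmt_3 (α : ℝ) (hα : α ∈ Set.Ioo (0 : ℝ) 1)
    (z : ℝ) (hz : cdf (gaussianReal 0 1) z = 1 - α / 2)
    (Ω : ℕ → Type*) (mΩ : ∀ n, MeasurableSpace (Ω n))
    (P : ∀ n, Measure (Ω n)) (hP : ∀ n, IsProbabilityMeasure (P n))
    (V : ∀ n, Ω n → ℝ)
    (hV : ∀ n, 2 ≤ n → Measure.map (V n) (P n) =
      gaussianReal 0 ((1 - (1 / 2 : ℝ) * ((n : ℝ) - 1) / n).toNNReal))
    (Φ : ℝ → ℝ) (hΦ : ∀ x, Φ x = cdf (gaussianReal 0 1) x) :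
    (∀ n, 2 ≤ n →
      (P n) {ω | |V n ω| ≤ z * Real.sqrt (1 - 1 / 2)} =
        ENNReal.ofReal
          (2 * Φ (z * Real.sqrt ((1 - 1 / 2) / (1 - (1 / 2 : ℝ) * ((n : ℝ) - 1) / n))) - 1) ∧
      2 * Φ (z * Real.sqrt ((1 - 1 / 2) / (1 - (1 / 2 : ℝ) * ((n : ℝ) - 1) / n))) - 1
        < 1 - α) ∧
    Filter.Tendsto
      (fun n : ℕ =>
        2 * Φ (z * Real.sqrt ((1 - 1 / 2) / (1 - (1 / 2 : ℝ) * ((n : ℝ) - 1) / n))) - 1)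
      Filter.atTop (nhds (1 - α)) :=
  stmt_3_general α hα z hz Ω mΩ P V hV Φ hΦ
end

section
/- Suppose, conditionally on $W_H = h$, a random variable $W$ satisfies $P(Q_h(W) \ge 1-\alpha) \le \alpha$ where $Q_h(w) = P_{\mathcal{S}_h}(w \notin \mathcal{S}_h)$, and for each realized data point the event $\{\eta \in C_\alpha(X)\}$ equals $\{Q_h(W_b) \le 1-\alpha\}$ where $W_b$ has the law of $W$ given $W_H = h$. Then $P(\eta \in C_\alpha(X) \mid H(X) = h) \ge 1 - \alpha$ for every $h$ and every mixing distribution $\pi^*$ on the unknown parameter $\theta^*$. -/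
open MeasureTheory
open scoped ENNReal

/-!
Under every parameter value `θ`, the complement of the coverage event `{Q ≤ 1 - α}` lies in
`{1 - α ≤ Q}`, whose probability is at most `α`, so the coverage event has probability at least
`1 - α`. The law of the data under the mixture `π*` is `π.bind μ`, which integrates these
probabilities against `π`; a bound holding for every `θ` survives the averaging.
-/

namespace MeasureTheory

variable {α Θ : Type*} [MeasurableSpace α] [MeasurableSpace Θ]

lemma one_sub_le_measure_of_compl_subset {μ : Measure α} [IsProbabilityMeasure μ]
    {s t : Set α} (hst : sᶜ ⊆ t) : 1 - μ t ≤ μ s := by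
  rw [tsub_le_iff_right, ← measure_univ (μ := μ)]
  calc μ Set.univ ≤ μ s + μ sᶜ := measure_univ_le_add_compl s
    _ ≤ μ s + μ t := by gcongr

lemma Measure.lintegral_le_bind_apply (π : Measure Θ) {μ : Θ → Measure α}
    (hμ : AEMeasurable μ π) (s : Set α) : ∫⁻ θ, μ θ s ∂π ≤ π.bind μ s := by
  set t := toMeasurable (π.bind μ) s
  calc ∫⁻ θ, μ θ s ∂π ≤ ∫⁻ θ, μ θ t ∂π :=
        lintegral_mono fun θ => measure_mono (subset_toMeasurable _ s)
    _ = π.bind μ t := (Measure.bind_apply (measurableSet_toMeasurable _ s) hμ).symm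
    _ = π.bind μ s := measure_toMeasurable s

lemma Measure.le_bind_apply_of_forall_le (π : Measure Θ) [IsProbabilityMeasure π]
    {μ : Θ → Measure α} (hμ : AEMeasurable μ π) {s : Set α} {c : ℝ≥0∞}
    (hc : ∀ θ, c ≤ μ θ s) : c ≤ π.bind μ s :=
  calc c = ∫⁻ _, c ∂π := by simp
    _ ≤ ∫⁻ θ, μ θ s ∂π := lintegral_mono hc
    _ ≤ π.bind μ s := π.lintegral_le_bind_apply hμ s

end MeasureTheory

theorem stmt_9_general {Θ : Type*} [MeasurableSpace Θ]
    (μ : Θ → Measure ℝ) (hprob : ∀ θ, IsProbabilityMeasure (μ θ))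
    (hmeas : Measurable μ)
    (Q : ℝ → ℝ) (α : ℝ)
    (hvalid : ∀ θ, (μ θ) {w : ℝ | 1 - α ≤ Q w} ≤ ENNReal.ofReal α)
    (A : Set ℝ) (hA : A = {w : ℝ | Q w ≤ 1 - α})
    (π : Measure Θ) [IsProbabilityMeasure π] :
    1 - ENNReal.ofReal α ≤ (π.bind μ) A := by
  have hcompl : Aᶜ ⊆ {w : ℝ | 1 - α ≤ Q w} := by
    subst hA
    exact fun w (hw : ¬Q w ≤ 1 - α) => (not_le.mp hw).le
  refine π.le_bind_apply_of_forall_le hmeas.aemeasurable fun θ => ?_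
  exact (tsub_le_tsub_left (hvalid θ) 1).trans (one_sub_le_measure_of_compl_subset hcompl)

/-- Abstraction of Theorem 1 (conditional validity). Fix `h` and let `μ θ` be the conditional
law (given `W_H = h`) of the auxiliary variable `W_b(θ*)` for each value `θ*` of the unknown
parameter. If the predictive random set is valid uniformly in `θ*`, i.e.
`P(Q_h(W) ≥ 1-α) ≤ α` under each `μ θ`, and the coverage event `{η ∈ C_α(X)}` equals
`{Q_h(W_b) ≤ 1-α}`, then the conditional coverage is at least `1-α` for every mixing
distribution `π*` on `θ*`. -/
theorem stmt_9 {Θ : Type*} [MeasurableSpace Θ]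
    (μ : Θ → Measure ℝ) (hprob : ∀ θ, IsProbabilityMeasure (μ θ))
    (hmeas : Measurable μ)
    (Q : ℝ → ℝ) (hQ : Measurable Q) (α : ℝ) (hα : α ∈ Set.Icc (0 : ℝ) 1)
    (hvalid : ∀ θ, (μ θ) {w : ℝ | 1 - α ≤ Q w} ≤ ENNReal.ofReal α)
    (A : Set ℝ) (hA : A = {w : ℝ | Q w ≤ 1 - α})
    (π : Measure Θ) [IsProbabilityMeasure π] :
    1 - ENNReal.ofReal α ≤ (π.bind μ) A :=
  stmt_9_general μ hprob hmeas Q α hvalid A hA π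
end

section
/- Let $(U, e_1)$ be bivariate normal with mean zero, unit variances, and correlation $\rho$, independent of $M^2 \sim \chi^2_{n-2}/(n-2)$. Set $W_H = U/M$ and $W_e = e_1/M$. Then conditional on $W_H = h$, the distribution of $M^2$ is $\frac{2}{h^2+n-2}\mathsf{Gamma}(\frac{n-1}{2})$, i.e., $M^2 \mid W_H = h$ has density proportional to $t^{(n-1)/2 - 1}e^{-(h^2+n-2)t/2}$ on $(0,\infty)$. -/
/-!
If `U ~ N(0,1)` is independent of `T ~ Gamma(s, r)`, then given `T = t` the ratio `W = U / √T`
is `N(0, 1/t)`, so `(W, T)` has joint density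
`r^s/Γ(s) t^(s-1) e^(-rt) · √(t/2π) e^(-t h²/2)`.
As a function of `t` this is proportional to `t^(s+1/2-1) e^(-(r + h²/2) t)`; factoring out its
`t`-integral writes the joint law as (law of `W`) ⊗ `Gamma(s + 1/2, r + h²/2)`, and uniqueness of
disintegrations identifies this kernel with the conditional distribution of `T` given `W`.
In the theorem `s = r = (n-2)/2`, and the law of `U` is the first marginal of the bivariate normal.
-/

open MeasureTheory ProbabilityTheory Real
open scoped ENNReal NNReal

theorem MeasureTheory.Measure.map_prod_apply_prod {α β γ : Type*} [MeasurableSpace α]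
    [MeasurableSpace β] [MeasurableSpace γ] (μ : Measure α) (ν : Measure β) [SFinite μ]
    [SFinite ν] {f : α × β → γ} (hf : Measurable f) {A : Set γ} {B : Set β}
    (hA : MeasurableSet A) (hB : MeasurableSet B) :
    (μ.prod ν).map (fun p => (f p, p.2)) (A ×ˢ B) =
      ∫⁻ b in B, μ.map (fun a => f (a, b)) A ∂ν := by
  have hT : Measurable fun p => (f p, p.2) := hf.prodMk measurable_snd
  rw [Measure.map_apply hT (hA.prod hB), Measure.prod_apply_symm (hT (hA.prod hB)),
    ← lintegral_indicator hB]
  congr with b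
  by_cases hb : b ∈ B
  · have hfb : Measurable fun a => f (a, b) := hf.comp measurable_prodMk_right
    rw [Set.indicator_of_mem hb, Measure.map_apply hfb hA]
    congr with a
    simp [hb]
  · rw [Set.indicator_of_notMem hb]
    convert measure_empty (μ := μ)
    ext a
    simp [hb]

lemma measurable_gammaPDF (a r : ℝ) : Measurable (gammaPDF a r) :=
  ENNReal.measurable_ofReal.comp (measurable_gammaPDFReal a r)

instance sFinite_gammaMeasure (a r : ℝ) : SFinite (gammaMeasure a r) := by
  unfold gammaMeasure; infer_instance

lemma ae_pos_gammaMeasure (a r : ℝ) : ∀ᵐ t ∂gammaMeasure a r, 0 < t := by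
  rw [gammaMeasure, ae_withDensity_iff (measurable_gammaPDF a r)]
  filter_upwards [Measure.ae_ne volume (0 : ℝ)] with t ht hpdf
  exact ht.lt_or_gt.resolve_left fun hneg => hpdf (gammaPDF_of_neg hneg)

-- For `t ≤ 0` both sides are the Dirac mass at `0`, because `√t = 0` and `x / 0 = 0`.
lemma gaussianReal_map_div_sqrt (μ : ℝ) (v : ℝ≥0) (t : ℝ) :
    (gaussianReal μ v).map (· / √t) = gaussianReal (μ / √t) (v / t.toNNReal) := by
  rw [gaussianReal_map_div_const]
  congr 2
  ext
  rcases le_total 0 t with ht | ht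
  · simp [sq_sqrt ht, Real.coe_toNNReal _ ht]
  · simp [sqrt_eq_zero'.mpr ht, Real.toNNReal_of_nonpos ht]

lemma measurable_gaussianPDF_inv_toNNReal :
    Measurable fun p : ℝ × ℝ => gaussianPDF 0 p.1.toNNReal⁻¹ p.2 :=
  ENNReal.measurable_ofReal.comp <| measurable_uncurry_gaussianPDFReal.comp <|
    measurable_const.prodMk
      ((measurable_real_toNNReal.comp measurable_fst).inv.prodMk measurable_snd)

-- The density of `U / √T`; the constant is `r^s/(Γ(s)√(2π))` times
-- `∫ t^(s-1/2) e^(-(r + h²/2) t) dt = Γ(s + 1/2) / (r + h²/2)^(s+1/2)`.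
noncomputable def normalGammaMarginalPDF (s r h : ℝ) : ℝ≥0∞ :=
  ENNReal.ofReal (r ^ s * Gamma (s + 1 / 2) /
    (Gamma s * √(2 * π) * (r + h ^ 2 / 2) ^ (s + 1 / 2)))

lemma gammaPDF_mul_gaussianPDF {s r : ℝ} (hs : 0 < s) (hr : 0 < r) (h : ℝ) {t : ℝ}
    (ht : t ≠ 0) :
    gammaPDF s r t * gaussianPDF 0 t.toNNReal⁻¹ h =
      normalGammaMarginalPDF s r h * gammaPDF (s + 1 / 2) (r + h ^ 2 / 2) t := by
  rcases ht.lt_or_gt with ht | ht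
  · simp [gammaPDF_of_neg ht]
  have hrate : 0 < r + h ^ 2 / 2 := by positivity
  rw [gammaPDF_of_nonneg ht.le, gammaPDF_of_nonneg ht.le, gaussianPDF, normalGammaMarginalPDF,
    ← ENNReal.ofReal_mul (by positivity), ← ENNReal.ofReal_mul (by positivity), gaussianPDFReal,
    NNReal.coe_inv, Real.coe_toNNReal _ ht.le]
  congr 1
  have hΓ : 0 < Gamma (s + 1 / 2) := Gamma_pos_of_pos (by positivity)
  have hpow : t ^ (s + 1 / 2 - 1) = t ^ (s - 1) * √t := by
    rw [sqrt_eq_rpow, ← rpow_add ht]; ring_nf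
  have hexp :
      exp (-((r + h ^ 2 / 2) * t)) = exp (-(r * t)) * exp (-(h - 0) ^ 2 / (2 * t⁻¹)) := by
    rw [← exp_add]; congr 1; field_simp; ring
  rw [hpow, hexp, show 2 * π * t⁻¹ = 2 * π / t by ring, sqrt_div' _ ht.le]
  have := rpow_pos_of_pos hrate (s + 1 / 2)
  have := sqrt_pos.mpr ht
  field_simp

noncomputable def normalGammaPosterior (s r : ℝ) : Kernel ℝ ℝ where
  toFun h := gammaMeasure (s + 1 / 2) (r + h ^ 2 / 2)
  measurable' := by
    refine Measure.measurable_of_measurable_coe _ fun B hB => ?_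
    simp only [gammaMeasure, withDensity_apply _ hB]
    refine Measurable.lintegral_prod_right
      (f := fun h t => gammaPDF (s + 1 / 2) (r + h ^ 2 / 2) t) ?_
    unfold Function.uncurry gammaPDF gammaPDFReal
    exact ENNReal.measurable_ofReal.comp <|
      Measurable.ite (measurableSet_le measurable_const measurable_snd) (by fun_prop)
        measurable_const

@[simp]
lemma normalGammaPosterior_apply (s r h : ℝ) :
    normalGammaPosterior s r h = gammaMeasure (s + 1 / 2) (r + h ^ 2 / 2) :=
  rfl

lemma isMarkovKernel_normalGammaPosterior {s r : ℝ} (hs : 0 < s) (hr : 0 < r) :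
    IsMarkovKernel (normalGammaPosterior s r) :=
  ⟨fun _ => isProbabilityMeasure_gammaMeasure (by positivity) (by positivity)⟩

lemma map_div_sqrt_gaussianReal_prod_gammaMeasure_apply_prod (s r : ℝ) {A B : Set ℝ}
    (hA : MeasurableSet A) (hB : MeasurableSet B) :
    ((gaussianReal 0 1).prod (gammaMeasure s r)).map (fun p => (p.1 / √p.2, p.2)) (A ×ˢ B) =
      ∫⁻ t in B, ∫⁻ h in A, gammaPDF s r t * gaussianPDF 0 t.toNNReal⁻¹ h := by
  have hdens : Measurable fun t : ℝ => ∫⁻ h in A, gaussianPDF 0 t.toNNReal⁻¹ h :=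
    measurable_gaussianPDF_inv_toNNReal.lintegral_prod_right'
  rw [Measure.map_prod_apply_prod _ _ (by fun_prop) hA hB]
  simp_rw [gaussianReal_map_div_sqrt, zero_div, one_div]
  calc ∫⁻ t in B, gaussianReal 0 t.toNNReal⁻¹ A ∂gammaMeasure s r
      = ∫⁻ t in B, (∫⁻ h in A, gaussianPDF 0 t.toNNReal⁻¹ h) ∂gammaMeasure s r := by
        refine setLIntegral_congr_fun_ae hB ?_
        filter_upwards [ae_pos_gammaMeasure s r] with t ht _
        rw [gaussianReal_of_var_ne_zero _ (by simpa using ht), withDensity_apply _ hA]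
    _ = ∫⁻ t in B, ∫⁻ h in A, gammaPDF s r t * gaussianPDF 0 t.toNNReal⁻¹ h := by
        rw [gammaMeasure, setLIntegral_withDensity_eq_setLIntegral_mul _
          (measurable_gammaPDF s r) hdens hB]
        refine setLIntegral_congr_fun hB fun t _ => ?_
        exact (lintegral_const_mul' _ _ ENNReal.ofReal_ne_top).symm

theorem map_div_sqrt_gaussianReal_prod_gammaMeasure {s r : ℝ} (hs : 0 < s) (hr : 0 < r) :
    ((gaussianReal 0 1).prod (gammaMeasure s r)).map (fun p => (p.1 / √p.2, p.2)) =
      volume.withDensity (normalGammaMarginalPDF s r) ⊗ₘ normalGammaPosterior s r := by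
  have := isProbabilityMeasure_gammaMeasure hs hr
  have := isMarkovKernel_normalGammaPosterior hs hr
  have hjoint :
      Measurable fun p : ℝ × ℝ => gammaPDF s r p.1 * gaussianPDF 0 p.1.toNNReal⁻¹ p.2 :=
    ((measurable_gammaPDF s r).comp measurable_fst).mul measurable_gaussianPDF_inv_toNNReal
  have hmarg : Measurable (normalGammaMarginalPDF s r) := by
    unfold normalGammaMarginalPDF; fun_prop
  refine Measure.ext_prod fun {A B} hA hB => ?_
  rw [map_div_sqrt_gaussianReal_prod_gammaMeasure_apply_prod s r hA hB,
    lintegral_lintegral_swap hjoint.aemeasurable, Measure.compProd_apply_prod hA hB,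
    setLIntegral_withDensity_eq_setLIntegral_mul _ hmarg (Kernel.measurable_coe _ hB) hA]
  refine setLIntegral_congr_fun hA fun h _ => ?_
  rw [Pi.mul_apply, normalGammaPosterior_apply, gammaMeasure, withDensity_apply _ hB,
    ← lintegral_const_mul' (normalGammaMarginalPDF s r h) _ ENNReal.ofReal_ne_top]
  exact lintegral_congr_ae <| ae_restrict_of_ae <|
    (Measure.ae_ne volume 0).mono fun t ht => gammaPDF_mul_gaussianPDF hs hr h ht

theorem condDistrib_div_sqrt_ae_eq_normalGammaPosterior {Ω : Type*} [MeasurableSpace Ω]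
    {P : Measure Ω} [IsProbabilityMeasure P] {U T : Ω → ℝ} {s r : ℝ} (hs : 0 < s)
    (hr : 0 < r) (hU : P.map U = gaussianReal 0 1) (hT : P.map T = gammaMeasure s r)
    (hUT : IndepFun U T P) :
    condDistrib T (fun ω => U ω / √(T ω)) P =ᵐ[P.map fun ω => U ω / √(T ω)]
      normalGammaPosterior s r := by
  have := isProbabilityMeasure_gammaMeasure hs hr
  have := isMarkovKernel_normalGammaPosterior hs hr
  have hUm : AEMeasurable U P := .of_map_ne_zero (hU ▸ IsProbabilityMeasure.ne_zero _)
  have hTm : AEMeasurable T P := .of_map_ne_zero (hT ▸ IsProbabilityMeasure.ne_zero _)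
  have hjoint : P.map (fun ω => (U ω / √(T ω), T ω)) =
      volume.withDensity (normalGammaMarginalPDF s r) ⊗ₘ normalGammaPosterior s r := by
    rw [← map_div_sqrt_gaussianReal_prod_gammaMeasure hs hr, ← hU, ← hT,
      ← (indepFun_iff_map_prod_eq_prod_map_map hUm hTm).mp hUT,
      AEMeasurable.map_map_of_aemeasurable (by fun_prop) (hUm.prodMk hTm)]
    rfl
  have hW :
      P.map (fun ω => U ω / √(T ω)) = volume.withDensity (normalGammaMarginalPDF s r) := by
    rw [← Measure.fst_map_prodMk₀ hTm, hjoint, Measure.fst_compProd]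
  refine condDistrib_ae_eq_of_measure_eq_compProd _ hTm ?_
  rw [hjoint, hW]

noncomputable def bivariateNormalPDF (ρ : ℝ) (p : ℝ × ℝ) : ℝ≥0∞ :=
  ENNReal.ofReal ((2 * π * √(1 - ρ ^ 2))⁻¹ *
    exp (-(p.1 ^ 2 - 2 * ρ * p.1 * p.2 + p.2 ^ 2) / (2 * (1 - ρ ^ 2))))

lemma measurable_bivariateNormalPDF (ρ : ℝ) : Measurable (bivariateNormalPDF ρ) := by
  unfold bivariateNormalPDF; fun_prop

lemma bivariateNormalPDF_eq_mul {ρ : ℝ} (hρ : ρ ^ 2 < 1) (u v : ℝ) :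
    bivariateNormalPDF ρ (u, v) =
      gaussianPDF 0 1 u * gaussianPDF (ρ * u) (1 - ρ ^ 2).toNNReal v := by
  have hρ' : 0 < 1 - ρ ^ 2 := by linarith
  rw [bivariateNormalPDF, gaussianPDF, gaussianPDF,
    ← ENNReal.ofReal_mul (gaussianPDFReal_nonneg _ _ _), gaussianPDFReal, gaussianPDFReal,
    Real.coe_toNNReal _ hρ'.le]
  have h2π : √(2 * π) * √(2 * π) = 2 * π := mul_self_sqrt (by positivity)
  have hsqrt : 0 < √(1 - ρ ^ 2) := sqrt_pos.mpr hρ'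
  have hexp : -(u ^ 2 - 2 * ρ * u * v + v ^ 2) / (2 * (1 - ρ ^ 2)) =
      -u ^ 2 / 2 + -(v - ρ * u) ^ 2 / (2 * (1 - ρ ^ 2)) := by
    field_simp
    ring
  rw [NNReal.coe_one, mul_one, mul_one, sub_zero, sqrt_mul' _ hρ'.le, hexp, exp_add,
    show 2 * π * √(1 - ρ ^ 2) = √(2 * π) * √(2 * π) * √(1 - ρ ^ 2) by rw [h2π]]
  field_simp

lemma fst_withDensity_bivariateNormalPDF {ρ : ℝ} (hρ : ρ ^ 2 < 1) :
    (volume.withDensity (bivariateNormalPDF ρ)).fst = gaussianReal 0 1 := by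
  have hvar : (1 - ρ ^ 2).toNNReal ≠ 0 := by simpa using hρ
  ext A hA
  rw [Measure.fst_apply hA, ← Set.prod_univ, withDensity_apply _ (hA.prod .univ),
    Measure.volume_eq_prod, setLIntegral_prod _ (measurable_bivariateNormalPDF ρ).aemeasurable,
    gaussianReal_of_var_ne_zero _ one_ne_zero, withDensity_apply _ hA]
  refine setLIntegral_congr_fun hA fun u _ => ?_
  simp_rw [Measure.restrict_univ, bivariateNormalPDF_eq_mul hρ,
    lintegral_const_mul _ (measurable_gaussianPDF _ _), lintegral_gaussianPDF_eq_one _ hvar,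
    mul_one]

lemma isProbabilityMeasure_withDensity_bivariateNormalPDF {ρ : ℝ} (hρ : ρ ^ 2 < 1) :
    IsProbabilityMeasure (volume.withDensity (bivariateNormalPDF ρ)) :=
  ⟨by rw [← Measure.fst_univ, fst_withDensity_bivariateNormalPDF hρ, measure_univ]⟩

/-- Let `(U, e₁)` be bivariate normal with zero means, unit variances and correlation `ρ`,
independent of `M² ~ χ²_{n-2}/(n-2)` (i.e. `Gamma((n-2)/2, (n-2)/2)`), and `W_H = U/M`.
Then conditionally on `W_H = h`, `M²` has the `(2/(h²+n-2)) Gamma((n-1)/2)` distribution,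
i.e. `Gamma` with shape `(n-1)/2` and rate `(h²+n-2)/2` (density ∝
`t^{(n-1)/2-1} e^{-(h²+n-2)t/2}` on `(0,∞)`). -/
theorem stmt_11 {Ω : Type*} [MeasurableSpace Ω] (P : Measure Ω) [IsProbabilityMeasure P]
    (n : ℕ) (hn : 3 ≤ n) (ρ : ℝ) (hρ : ρ ∈ Set.Ioo (-1 : ℝ) 1)
    (U e₁ M2 : Ω → ℝ)
    (hUe : Measure.map (fun ω => (U ω, e₁ ω)) P =
      volume.withDensity fun p : ℝ × ℝ => ENNReal.ofReal
        ((2 * Real.pi * Real.sqrt (1 - ρ ^ 2))⁻¹ *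
          Real.exp (-(p.1 ^ 2 - 2 * ρ * p.1 * p.2 + p.2 ^ 2) / (2 * (1 - ρ ^ 2)))))
    (hM2 : Measure.map M2 P = gammaMeasure (((n : ℝ) - 2) / 2) (((n : ℝ) - 2) / 2))
    (hindep : IndepFun (fun ω => (U ω, e₁ ω)) M2 P)
    (WH : Ω → ℝ) (hWH : ∀ ω, WH ω = U ω / Real.sqrt (M2 ω)) :
    ∀ᵐ h ∂(Measure.map WH P),
      condDistrib M2 WH P h = gammaMeasure (((n : ℝ) - 1) / 2) ((h ^ 2 + (n : ℝ) - 2) / 2) := by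
  have hρ2 : ρ ^ 2 < 1 := by nlinarith [hρ.1, hρ.2]
  have hs : 0 < ((n : ℝ) - 2) / 2 := by
    have : (3 : ℝ) ≤ n := by exact_mod_cast hn
    linarith
  have hUe' : P.map (fun ω => (U ω, e₁ ω)) = volume.withDensity (bivariateNormalPDF ρ) := hUe
  have := isProbabilityMeasure_withDensity_bivariateNormalPDF hρ2
  have hUem : AEMeasurable (fun ω => (U ω, e₁ ω)) P :=
    .of_map_ne_zero (hUe' ▸ IsProbabilityMeasure.ne_zero _)
  have he₁ : AEMeasurable e₁ P := measurable_snd.comp_aemeasurable hUem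
  have hU : P.map U = gaussianReal 0 1 := by
    rw [← Measure.fst_map_prodMk₀ he₁, hUe', fst_withDensity_bivariateNormalPDF hρ2]
  have hWH' : WH = fun ω => U ω / √(M2 ω) := funext hWH
  subst hWH'
  filter_upwards [condDistrib_div_sqrt_ae_eq_normalGammaPosterior hs hs hU hM2
    (hindep.comp measurable_fst measurable_id)] with h hh
  rw [hh, normalGammaPosterior_apply]
  congr 1 <;> ring
end

section
/- Let $X_n, Y_n$ be sequences of random variables such that $Y_n \to U$ in probability where $U$ is independent of a random variable $V$, and $X_n \to V$ in probability. Suppose additionally that the likelihood-ratio condition holds: under the product measure $Q_n$ making $X_n$ and $Y_n$ independent with their marginal laws, the density ratio $l_n(X_n, Y_n) = \frac{p_n(x,y)}{g_n(x)h_n(y)} \to 1$ in $Q_n$-probability. Then the conditional distribution of $X_n$ given $Y_n$ converges weakly in probability to the (unconditional) law of $V$: for every continuity point $z$ of $F_V$, $F_{X_n|Y_n}(z) \to F_V(z)$ in probability. -/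
/-!
Off the set where `|lₙ - 1| > ε`, the joint density `pₙ` is at least `(1 - ε) gₙ hₙ`, so the law
`ρₙ` of `(Xₙ, Yₙ)` and the product `Qₙ` of its marginals are close in total variation:
`Qₙ S ≤ ρₙ S + ε + Qₙ {|lₙ - 1| > ε}` for every `S`, and symmetrically since both have mass one.
Integrating the conditional c.d.f. over `{y | F_{Xₙ|Yₙ=y}(z) ≥ F_{Xₙ}(z) + e}` against `ρₙ` and
`Qₙ` (under which `Xₙ` given `Yₙ` has law `F_{Xₙ}`) turns a total-variation bound `r` into
`e · P(|F_{Xₙ|Yₙ}(z) - F_{Xₙ}(z)| > e) ≤ 2r`. Finally `F_{Xₙ}(z) → F_V(z)` at continuity points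
of `F_V`, because convergence in probability implies convergence in distribution.
-/

open MeasureTheory ProbabilityTheory Filter Set Topology
open scoped ENNReal

section

variable {Ω α β : Type*} [MeasurableSpace Ω] [MeasurableSpace α] [MeasurableSpace β]

lemma ENNReal.le_tsub_mul_add_mul (a ε : ℝ≥0∞) : a ≤ (1 - ε) * a + ε * a := by
  calc a = 1 * a := (one_mul a).symm
    _ ≤ (1 - ε + ε) * a := by gcongr; exact le_tsub_add
    _ = (1 - ε) * a + ε * a := add_mul _ _ _

lemma ENNReal.add_ofReal_le_or_of_lt_abs_toReal_sub {a b : ℝ≥0∞} (ha : a ≠ ∞) (hb : b ≠ ∞)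
    {e : ℝ} (he : 0 ≤ e) (h : e < |a.toReal - b.toReal|) :
    b + ENNReal.ofReal e ≤ a ∨ a + ENNReal.ofReal e ≤ b := by
  have key : ∀ {x y : ℝ≥0∞}, x ≠ ∞ → y ≠ ∞ → x.toReal + e ≤ y.toReal →
      x + ENNReal.ofReal e ≤ y := fun hx hy hxy => by
    rwa [← ENNReal.ofReal_toReal hx, ← ENNReal.ofReal_add ENNReal.toReal_nonneg he,
      ENNReal.ofReal_le_iff_le_toReal hy]
  rcases lt_abs.mp h with h | h
  · exact .inl (key hb ha (by linarith))
  · exact .inr (key ha hb (by linarith))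

lemma one_sub_ofReal_mul_le_of_abs_div_sub_one_le {p g h ε : ℝ}
    (hle : |p / (g * h) - 1| ≤ ε) :
    (1 - ENNReal.ofReal ε) * (ENNReal.ofReal g * ENNReal.ofReal h) ≤ ENNReal.ofReal p := by
  rcases le_or_gt g 0 with hg | hg
  · simp [ENNReal.ofReal_of_nonpos hg]
  rcases le_or_gt h 0 with hh | hh
  · simp [ENNReal.ofReal_of_nonpos hh]
  have hgh : 0 < g * h := mul_pos hg hh
  have hp : (1 - ε) * (g * h) ≤ p := (le_div_iff₀ hgh).mp (by linarith [(abs_le.mp hle).1])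
  rw [← ENNReal.ofReal_one, ← ENNReal.ofReal_sub _ ((abs_nonneg _).trans hle),
    ← ENNReal.ofReal_mul hg.le, ← ENNReal.ofReal_mul' hgh.le]
  exact ENNReal.ofReal_le_ofReal hp

lemma MeasureTheory.Measure.le_add_of_forall_le_add {μ ν : Measure α} [IsFiniteMeasure μ]
    (huniv : μ univ = ν univ) {r : ℝ≥0∞} (h : ∀ t, MeasurableSet t → μ t ≤ ν t + r)
    {s : Set α} (hs : MeasurableSet s) : ν s ≤ μ s + r := by
  have hfin : ν sᶜ ≠ ∞ :=
    ne_top_of_le_ne_top (huniv ▸ measure_ne_top μ univ) (measure_mono (subset_univ _))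
  refine ENNReal.le_of_add_le_add_right hfin ?_
  calc ν s + ν sᶜ = μ s + μ sᶜ := by
        rw [measure_add_measure_compl hs, measure_add_measure_compl hs, huniv]
    _ ≤ μ s + (ν sᶜ + r) := by gcongr; exact h _ hs.compl
    _ = μ s + r + ν sᶜ := by ring

lemma exists_measurable_le_withDensity_eq (ν : Measure α) {f : α → ℝ≥0∞}
    (hf : ∫⁻ x, f x ∂ν ≠ ∞) :
    ∃ f' : α → ℝ≥0∞, Measurable f' ∧ f' ≤ f ∧ ν.withDensity f' = ν.withDensity f := by
  obtain ⟨f', hf'm, hle, heq⟩ := exists_measurable_le_lintegral_eq ν f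
  refine ⟨f', hf'm, hle, ?_⟩
  have : IsFiniteMeasure (ν.withDensity f') := isFiniteMeasure_withDensity (heq ▸ hf)
  have hmono := withDensity_mono (μ := ν) (Eventually.of_forall hle)
  ext s hs
  refine le_antisymm (hmono s) ?_
  simpa using Measure.le_add_of_forall_le_add (by simp [heq]) (r := 0)
    (fun t _ => by simpa using hmono t) hs

-- The densities of the marginals need not be measurable (`prod_withDensity` requires it), but a
-- measurable minorant with the same integral is a density of the same law.
lemma exists_measurable_density_of_map_eq_withDensity {P : Measure Ω} [IsFiniteMeasure P]
    {X : Ω → α} {ν : Measure α} {g : α → ℝ}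
    (hg : P.map X = ν.withDensity fun x => ENNReal.ofReal (g x)) :
    ∃ g' : α → ℝ≥0∞, Measurable g' ∧ g' ≤ (fun x => ENNReal.ofReal (g x)) ∧
      P.map X = ν.withDensity g' := by
  have hfin : ∫⁻ x, ENNReal.ofReal (g x) ∂ν ≠ ∞ := by
    rw [← setLIntegral_univ, ← withDensity_apply _ .univ, ← hg]
    exact measure_ne_top _ _
  obtain ⟨g', hg'm, hle, heq⟩ := exists_measurable_le_withDensity_eq ν hfin
  exact ⟨g', hg'm, hle, hg.trans heq.symm⟩

lemma withDensity_apply_le_add (ν : Measure α) {p q : α → ℝ≥0∞} {ε : ℝ≥0∞} {B : Set α}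
    (hpq : ∀ x ∉ B, (1 - ε) * q x ≤ p x) {s : Set α} (hs : MeasurableSet s) :
    ν.withDensity q s ≤ ν.withDensity p s + ε * ν.withDensity q univ + ν.withDensity q B := by
  set Q := ν.withDensity q
  set C := (toMeasurable Q B)ᶜ
  have hC : MeasurableSet C := (measurableSet_toMeasurable _ _).compl
  have hgood : (1 - ε) * Q (s ∩ C) ≤ ν.withDensity p s := by
    rw [withDensity_apply _ (hs.inter hC), withDensity_apply _ hs]
    calc (1 - ε) * ∫⁻ x in s ∩ C, q x ∂ν ≤ ∫⁻ x in s ∩ C, (1 - ε) * q x ∂ν :=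
          lintegral_const_mul_le _ _
      _ ≤ ∫⁻ x in s ∩ C, p x ∂ν := setLIntegral_mono' (hs.inter hC) fun x hx =>
          hpq x fun hB => hx.2 (subset_toMeasurable _ _ hB)
      _ ≤ ∫⁻ x in s, p x ∂ν := lintegral_mono_set inter_subset_left
  calc Q s = Q (s ∩ C) + Q (s \ C) := (measure_inter_add_sdiff s hC).symm
    _ ≤ ((1 - ε) * Q (s ∩ C) + ε * Q (s ∩ C)) + Q (toMeasurable Q B) :=
        add_le_add (ENNReal.le_tsub_mul_add_mul _ _)
          (measure_mono fun x hx => by simpa [C] using hx.2)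
    _ ≤ ν.withDensity p s + ε * Q univ + Q B := by
        rw [measure_toMeasurable]; gcongr; exact subset_univ _

lemma prod_map_apply_le_of_abs_density_ratio_sub_one {P : Measure Ω} [IsProbabilityMeasure P]
    {X : Ω → α} {Y : Ω → β} (hX : Measurable X) (hY : Measurable Y)
    {μ₀ : Measure α} {ν₀ : Measure β} [SFinite μ₀] [SFinite ν₀]
    {p : α × β → ℝ} {g : α → ℝ} {h : β → ℝ}
    (hp : P.map (fun ω => (X ω, Y ω)) = (μ₀.prod ν₀).withDensity fun q => ENNReal.ofReal (p q))
    (hg : P.map X = μ₀.withDensity fun x => ENNReal.ofReal (g x))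
    (hh : P.map Y = ν₀.withDensity fun y => ENNReal.ofReal (h y)) (ε : ℝ)
    {s : Set (α × β)} (hs : MeasurableSet s) :
    (P.map X).prod (P.map Y) s ≤ P.map (fun ω => (X ω, Y ω)) s + ENNReal.ofReal ε +
      (P.map X).prod (P.map Y) {q | ε < |p q / (g q.1 * h q.2) - 1|} := by
  obtain ⟨g', hg'm, hg'le, hg'⟩ := exists_measurable_density_of_map_eq_withDensity hg
  obtain ⟨h', hh'm, hh'le, hh'⟩ := exists_measurable_density_of_map_eq_withDensity hh
  have hQ : (P.map X).prod (P.map Y) = (μ₀.prod ν₀).withDensity fun q => g' q.1 * h' q.2 := by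
    rw [hg', hh', prod_withDensity hg'm hh'm]
  have hpoint : ∀ q ∉ {q : α × β | ε < |p q / (g q.1 * h q.2) - 1|},
      (1 - ENNReal.ofReal ε) * (g' q.1 * h' q.2) ≤ ENNReal.ofReal (p q) := fun q hq =>
    calc (1 - ENNReal.ofReal ε) * (g' q.1 * h' q.2)
        ≤ (1 - ENNReal.ofReal ε) * (ENNReal.ofReal (g q.1) * ENNReal.ofReal (h q.2)) := by
          gcongr; exacts [hg'le _, hh'le _]
      _ ≤ ENNReal.ofReal (p q) := one_sub_ofReal_mul_le_of_abs_div_sub_one_le (not_lt.mp hq)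
  have key := withDensity_apply_le_add (μ₀.prod ν₀) hpoint hs
  have : IsProbabilityMeasure (P.map X) := Measure.isProbabilityMeasure_map hX.aemeasurable
  have : IsProbabilityMeasure (P.map Y) := Measure.isProbabilityMeasure_map hY.aemeasurable
  rwa [← hQ, ← hp, measure_univ, mul_one] at key

lemma eventually_prod_map_le_map_add {P : Measure Ω} [IsProbabilityMeasure P]
    {X : ℕ → Ω → α} {Y : ℕ → Ω → β} (hX : ∀ n, Measurable (X n)) (hY : ∀ n, Measurable (Y n))
    {μ₀ : Measure α} {ν₀ : Measure β} [SFinite μ₀] [SFinite ν₀]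
    {p : ℕ → α × β → ℝ} {g : ℕ → α → ℝ} {h : ℕ → β → ℝ}
    (hp : ∀ n, P.map (fun ω => (X n ω, Y n ω)) =
      (μ₀.prod ν₀).withDensity fun q => ENNReal.ofReal (p n q))
    (hg : ∀ n, P.map (X n) = μ₀.withDensity fun x => ENNReal.ofReal (g n x))
    (hh : ∀ n, P.map (Y n) = ν₀.withDensity fun y => ENNReal.ofReal (h n y))
    (hratio : ∀ ε > (0 : ℝ), Tendsto (fun n => (P.map (X n)).prod (P.map (Y n))
      {q | ε < |p n q / (g n q.1 * h n q.2) - 1|}) atTop (𝓝 0))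
    {δ : ℝ} (hδ : 0 < δ) :
    ∀ᶠ n in atTop, ∀ t, MeasurableSet t → (P.map (X n)).prod (P.map (Y n)) t ≤
      P.map (fun ω => (X n ω, Y n ω)) t + ENNReal.ofReal δ := by
  filter_upwards [(hratio (δ / 2) (half_pos hδ)).eventually_le_const
    (ENNReal.ofReal_pos.mpr (half_pos hδ))] with n hn t ht
  calc (P.map (X n)).prod (P.map (Y n)) t
      ≤ P.map (fun ω => (X n ω, Y n ω)) t + ENNReal.ofReal (δ / 2) + ENNReal.ofReal (δ / 2) :=
        (prod_map_apply_le_of_abs_density_ratio_sub_one (hX n) (hY n) (hp n) (hg n) (hh n) _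
          ht).trans (by gcongr)
    _ = P.map (fun ω => (X n ω, Y n ω)) t + ENNReal.ofReal δ := by
        rw [add_assoc, ← ENNReal.ofReal_add (half_pos hδ).le (half_pos hδ).le, add_halves]

lemma mul_measure_le_of_add_le_setLIntegral {μ : Measure Ω} {f g : Ω → ℝ≥0∞} {c r : ℝ≥0∞}
    {E : Set Ω} (hE : MeasurableSet E) (hf : ∫⁻ x in E, f x ∂μ ≠ ∞)
    (hfg : ∀ x ∈ E, f x + c ≤ g x) (hgf : ∫⁻ x in E, g x ∂μ ≤ ∫⁻ x in E, f x ∂μ + r) :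
    c * μ E ≤ r := by
  refine (ENNReal.add_le_add_iff_left hf).mp ?_
  calc ∫⁻ x in E, f x ∂μ + c * μ E = ∫⁻ x in E, (f x + c) ∂μ := by
        rw [lintegral_add_right _ measurable_const, setLIntegral_const]
    _ ≤ ∫⁻ x in E, g x ∂μ := setLIntegral_mono' hE hfg
    _ ≤ ∫⁻ x in E, f x ∂μ + r := hgf

section CondDistrib

variable {P : Measure Ω} [IsFiniteMeasure P] {X : Ω → α} {Y : Ω → β}

lemma prod_map_apply_prod_eq_setLIntegral (hY : Measurable Y) {s : Set α} {A : Set β}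
    (hA : MeasurableSet A) :
    (P.map X).prod (P.map Y) (s ×ˢ A) = ∫⁻ _ in Y ⁻¹' A, P.map X s ∂P := by
  rw [Measure.prod_prod, Measure.map_apply hY hA, setLIntegral_const]

variable [StandardBorelSpace α] [Nonempty α]

lemma map_prodMk_apply_prod_eq_setLIntegral_condDistrib (hX : Measurable X) (hY : Measurable Y)
    {s : Set α} {A : Set β} (hs : MeasurableSet s) (hA : MeasurableSet A) :
    P.map (fun ω => (X ω, Y ω)) (s ×ˢ A) = ∫⁻ ω in Y ⁻¹' A, condDistrib X Y P (Y ω) s ∂P := by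
  rw [setLIntegral_preimage_condDistrib hY hX.aemeasurable hs hA,
    Measure.map_apply (hX.prodMk hY) (hs.prod hA), inter_comm]
  rfl

lemma mul_measure_lt_abs_condDistrib_sub_le [IsProbabilityMeasure P] (hX : Measurable X)
    (hY : Measurable Y) {r : ℝ≥0∞}
    (hQρ : ∀ t, MeasurableSet t →
      (P.map X).prod (P.map Y) t ≤ P.map (fun ω => (X ω, Y ω)) t + r)
    {s : Set α} (hs : MeasurableSet s) {e : ℝ} (he : 0 ≤ e) :
    ENNReal.ofReal e * P {ω | e < |(condDistrib X Y P (Y ω) s).toReal - (P.map X s).toReal|}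
      ≤ 2 * r := by
  have : IsProbabilityMeasure (P.map X) := Measure.isProbabilityMeasure_map hX.aemeasurable
  have : IsProbabilityMeasure (P.map Y) := Measure.isProbabilityMeasure_map hY.aemeasurable
  have hρQ : ∀ t, MeasurableSet t →
      P.map (fun ω => (X ω, Y ω)) t ≤ (P.map X).prod (P.map Y) t + r :=
    fun t ht => Measure.le_add_of_forall_le_add (by simp [Measure.map_apply_of_aemeasurable,
      (hX.prodMk hY).aemeasurable]) hQρ ht
  set κ := condDistrib X Y P
  set b := P.map X s
  have hκ : Measurable fun y => κ y s := Kernel.measurable_coe _ hs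
  set A₁ := {y | b + ENNReal.ofReal e ≤ κ y s}
  set A₂ := {y | κ y s + ENNReal.ofReal e ≤ b}
  have hA₁ : MeasurableSet A₁ := measurableSet_le measurable_const hκ
  have hA₂ : MeasurableSet A₂ := measurableSet_le (hκ.add measurable_const) measurable_const
  have h₁ : ENNReal.ofReal e * P (Y ⁻¹' A₁) ≤ r := by
    refine mul_measure_le_of_add_le_setLIntegral (hY hA₁) ?_ (fun ω hω => hω) ?_
    · rw [setLIntegral_const]
      exact ENNReal.mul_ne_top (measure_ne_top _ _) (measure_ne_top _ _)
    · rw [← map_prodMk_apply_prod_eq_setLIntegral_condDistrib hX hY hs hA₁,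
        ← prod_map_apply_prod_eq_setLIntegral hY hA₁]
      exact hρQ _ (hs.prod hA₁)
  have h₂ : ENNReal.ofReal e * P (Y ⁻¹' A₂) ≤ r := by
    refine mul_measure_le_of_add_le_setLIntegral (hY hA₂) ?_ (fun ω hω => hω) ?_
    · rw [← map_prodMk_apply_prod_eq_setLIntegral_condDistrib hX hY hs hA₂]
      exact measure_ne_top _ _
    · rw [← map_prodMk_apply_prod_eq_setLIntegral_condDistrib hX hY hs hA₂,
        ← prod_map_apply_prod_eq_setLIntegral hY hA₂]
      exact hQρ _ (hs.prod hA₂)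
  have hsub : {ω | e < |(κ (Y ω) s).toReal - b.toReal|} ⊆ Y ⁻¹' A₁ ∪ Y ⁻¹' A₂ := fun ω hω =>
    ENNReal.add_ofReal_le_or_of_lt_abs_toReal_sub (measure_ne_top _ _) (measure_ne_top _ _) he hω
  calc ENNReal.ofReal e * P {ω | e < |(κ (Y ω) s).toReal - b.toReal|}
      ≤ ENNReal.ofReal e * (P (Y ⁻¹' A₁) + P (Y ⁻¹' A₂)) := by
        gcongr; exact (measure_mono hsub).trans (measure_union_le _ _)
    _ ≤ r + r := by rw [mul_add]; exact add_le_add h₁ h₂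
    _ = 2 * r := (two_mul r).symm

end CondDistrib

lemma tendsto_measure_lt_abs_condDistrib_sub [StandardBorelSpace α] [Nonempty α]
    {P : Measure Ω} [IsProbabilityMeasure P]
    {X : ℕ → Ω → α} {Y : ℕ → Ω → β} (hX : ∀ n, Measurable (X n)) (hY : ∀ n, Measurable (Y n))
    (hQρ : ∀ δ > (0 : ℝ), ∀ᶠ n in atTop, ∀ t, MeasurableSet t →
      (P.map (X n)).prod (P.map (Y n)) t ≤ P.map (fun ω => (X n ω, Y n ω)) t + ENNReal.ofReal δ)
    {s : Set α} (hs : MeasurableSet s) {e : ℝ} (he : 0 < e) :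
    Tendsto (fun n => P {ω | e <
      |(condDistrib (X n) (Y n) P (Y n ω) s).toReal - (P.map (X n) s).toReal|}) atTop (𝓝 0) := by
  refine ENNReal.tendsto_nhds_zero.mpr fun η hη => ?_
  obtain ⟨t, -, ht, htη⟩ := ENNReal.lt_iff_exists_real_btwn.mp hη
  have ht0 : 0 < t := ENNReal.ofReal_pos.mp ht
  filter_upwards [hQρ (e * t / 2) (by positivity)] with n hn
  refine le_trans ?_ htη.le
  refine (ENNReal.mul_le_mul_iff_right (ENNReal.ofReal_pos.mpr he).ne' ENNReal.ofReal_ne_top).mp ?_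
  calc _ ≤ 2 * ENNReal.ofReal (e * t / 2) :=
        mul_measure_lt_abs_condDistrib_sub_le (hX n) (hY n) hn hs he.le
    _ = ENNReal.ofReal e * ENNReal.ofReal t := by
        rw [← ENNReal.ofReal_mul he.le, ← ENNReal.ofReal_ofNat 2,
          ← ENNReal.ofReal_mul (by norm_num)]
        ring_nf

lemma tendstoInMeasure_of_tendsto_measure_lt_abs {μ : Measure α} {f : ℕ → α → ℝ} {g : α → ℝ}
    (h : ∀ ε > (0 : ℝ), Tendsto (fun n => μ {x | ε < |f n x - g x|}) atTop (𝓝 0)) :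
    TendstoInMeasure μ f atTop g := by
  refine tendstoInMeasure_iff_dist.mpr fun ε hε => ?_
  refine tendsto_of_tendsto_of_tendsto_of_le_of_le tendsto_const_nhds (h (ε / 2) (half_pos hε))
    (fun _ => zero_le) fun n => measure_mono fun x hx => ?_
  simp only [mem_ofPred_eq, Real.dist_eq] at hx ⊢
  linarith

lemma measure_singleton_eq_zero_of_continuousAt {μ : Measure ℝ} [IsProbabilityMeasure μ] {z : ℝ}
    (hz : ContinuousAt (fun t => (μ (Iic t)).toReal) z) : μ {z} = 0 := by
  have hcdf : (cdf μ : ℝ → ℝ) = fun t => (μ (Iic t)).toReal := by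
    ext t; rw [cdf_eq_real, measureReal_def]
  have hleft : Function.leftLim (cdf μ) z = cdf μ z :=
    leftLim_eq_of_tendsto ((hcdf ▸ hz).tendsto.mono_left nhdsWithin_le_nhds)
  rw [← measure_cdf μ, StieltjesFunction.measure_singleton, hleft, sub_self, ENNReal.ofReal_zero]

lemma tendsto_measure_Iic_toReal_of_tendstoInMeasure {P : Measure Ω} [IsProbabilityMeasure P]
    {X : ℕ → Ω → ℝ} {V : Ω → ℝ} (hX : ∀ n, Measurable (X n)) (hXV : TendstoInMeasure P X atTop V)
    {z : ℝ} (hz : ContinuousAt (fun t => ((P.map V) (Iic t)).toReal) z) :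
    Tendsto (fun n => ((P.map (X n)) (Iic z)).toReal) atTop (𝓝 ((P.map V) (Iic z)).toReal) := by
  have hV := hXV.aemeasurable fun n => (hX n).aemeasurable
  have hlaw := (hXV.tendstoInDistribution fun n => (hX n).aemeasurable).tendsto
  have hnull : P.map V (frontier (Iic z)) = 0 := by
    have := Measure.isProbabilityMeasure_map hV
    rw [frontier_Iic]
    exact measure_singleton_eq_zero_of_continuousAt hz
  exact (ENNReal.tendsto_toReal (measure_ne_top _ _)).comp
    (ProbabilityMeasure.tendsto_measure_of_null_frontier_of_tendsto' hlaw hnull)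

end

theorem stmt_19_general {Ω : Type*} [MeasurableSpace Ω] (P : Measure Ω) [IsProbabilityMeasure P]
    (X Y : ℕ → Ω → ℝ) (V : Ω → ℝ)
    (hXm : ∀ n, Measurable (X n)) (hYm : ∀ n, Measurable (Y n))
    (hXV : ∀ ε > (0 : ℝ), Tendsto (fun n => P {ω | ε < |X n ω - V ω|}) atTop (nhds 0))
    (p : ℕ → ℝ × ℝ → ℝ) (g h : ℕ → ℝ → ℝ)
    (hp : ∀ n, Measure.map (fun ω => (X n ω, Y n ω)) P =
      volume.withDensity fun q => ENNReal.ofReal (p n q))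
    (hg : ∀ n, Measure.map (X n) P = volume.withDensity fun x => ENNReal.ofReal (g n x))
    (hh : ∀ n, Measure.map (Y n) P = volume.withDensity fun y => ENNReal.ofReal (h n y))
    (l : ℕ → ℝ × ℝ → ℝ) (hl : ∀ n q, l n q = p n q / (g n q.1 * h n q.2))
    (hlto1 : ∀ ε > (0 : ℝ),
      Tendsto (fun n => ((Measure.map (X n) P).prod (Measure.map (Y n) P))
        {q : ℝ × ℝ | ε < |l n q - 1|}) atTop (nhds 0)) :
    ∀ z : ℝ, ContinuousAt (fun t => ((Measure.map V P) (Iic t)).toReal) z →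
      ∀ ε > (0 : ℝ),
        Tendsto (fun n => P {ω | ε <
            |((condDistrib (X n) (Y n) P (Y n ω)) (Iic z)).toReal -
              ((Measure.map V P) (Iic z)).toReal|}) atTop (nhds 0) := by
  intro z hz ε hε
  have hcdf := tendsto_measure_Iic_toReal_of_tendstoInMeasure hXm
    (tendstoInMeasure_of_tendsto_measure_lt_abs hXV) hz
  rw [Measure.volume_eq_prod] at hp
  simp only [hl] at hlto1
  have hdev := tendsto_measure_lt_abs_condDistrib_sub hXm hYm
    (fun δ hδ => eventually_prod_map_le_map_add hXm hYm hp hg hh hlto1 hδ)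
    (measurableSet_Iic (a := z)) (half_pos hε)
  refine tendsto_of_tendsto_of_tendsto_of_le_of_le' tendsto_const_nhds hdev
    (.of_forall fun _ => zero_le) ?_
  filter_upwards [Metric.tendsto_nhds.mp hcdf (ε / 2) (half_pos hε)] with n hn
  refine measure_mono fun ω hω => ?_
  simp only [mem_ofPred_eq, Real.dist_eq] at hω hn ⊢
  linarith [abs_sub_le ((condDistrib (X n) (Y n) P (Y n ω)) (Iic z)).toReal
    ((P.map (X n)) (Iic z)).toReal ((P.map V) (Iic z)).toReal]

/-- Abstract core of Theorem 3 (efficiency): if `Yₙ → U` in probability, `Xₙ → V` in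
probability, `U` and `V` are independent, `(Xₙ, Yₙ)` has joint density `pₙ` with marginal
densities `gₙ, hₙ`, and the likelihood ratio `lₙ = pₙ/(gₙhₙ) → 1` in probability under the
product of the marginal laws, then the conditional distribution of `Xₙ` given `Yₙ` converges
weakly in probability to the law of `V`: at every continuity point `z` of the c.d.f. of `V`,
`F_{Xₙ|Yₙ}(z) → F_V(z)` in probability. -/
theorem stmt_19 {Ω : Type*} [MeasurableSpace Ω] (P : Measure Ω) [IsProbabilityMeasure P]
    (X Y : ℕ → Ω → ℝ) (U V : Ω → ℝ)
    (hXm : ∀ n, Measurable (X n)) (hYm : ∀ n, Measurable (Y n))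
    (hUm : Measurable U) (hVm : Measurable V)
    (hUV : IndepFun U V P)
    (hYU : ∀ ε > (0 : ℝ), Tendsto (fun n => P {ω | ε < |Y n ω - U ω|}) atTop (nhds 0))
    (hXV : ∀ ε > (0 : ℝ), Tendsto (fun n => P {ω | ε < |X n ω - V ω|}) atTop (nhds 0))
    (p : ℕ → ℝ × ℝ → ℝ) (g h : ℕ → ℝ → ℝ)
    (hp : ∀ n, Measure.map (fun ω => (X n ω, Y n ω)) P =
      volume.withDensity fun q => ENNReal.ofReal (p n q))
    (hg : ∀ n, Measure.map (X n) P = volume.withDensity fun x => ENNReal.ofReal (g n x))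
    (hh : ∀ n, Measure.map (Y n) P = volume.withDensity fun y => ENNReal.ofReal (h n y))
    (l : ℕ → ℝ × ℝ → ℝ) (hl : ∀ n q, l n q = p n q / (g n q.1 * h n q.2))
    (hlto1 : ∀ ε > (0 : ℝ),
      Tendsto (fun n => ((Measure.map (X n) P).prod (Measure.map (Y n) P))
        {q : ℝ × ℝ | ε < |l n q - 1|}) atTop (nhds 0)) :
    ∀ z : ℝ, ContinuousAt (fun t => ((Measure.map V P) (Iic t)).toReal) z →
      ∀ ε > (0 : ℝ),
        Tendsto (fun n => P {ω | ε <
            |((condDistrib (X n) (Y n) P (Y n ω)) (Iic z)).toReal -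
              ((Measure.map V P) (Iic z)).toReal|}) atTop (nhds 0) :=
  stmt_19_general P X Y V hXm hYm hXV p g h hp hg hh l hl hlto1
end
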